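/- arXiv:math/0702210 — 4 statements merged into one kernel-verified Lean document; each statement's English description precedes it below -/
import Mathlib

section
/- Let F, G ⊆ [ℕ]^{<∞} be regular families (hereditary, spreading, compact). Then the family F[G] = { G_1 ∪ ⋯ ∪ G_k : G_i ∈ G, G_1 < ⋯ < G_k, (min G_i)_{i=1}^k ∈ F } is regular. -/
open Filter

/-- The characteristic function of a finite set, as an element of the Cantor
space `2^ℕ = ℕ → Bool`. -/
def charFun (A : Finset ℕ) : ℕ → Bool := fun n => decide (n ∈ A)

/-- A family of finite subsets of `ℕ` is hereditary if it is closed under subsets. -/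
def IsHereditaryFam (F : Set (Finset ℕ)) : Prop :=
  ∀ A ∈ F, ∀ B ⊆ A, B ∈ F

/-- A family is spreading if it is closed under moving elements to the right. -/
def IsSpreadingFam (F : Set (Finset ℕ)) : Prop :=
  ∀ A ∈ F, ∀ φ : ℕ → ℕ,
    (∀ a ∈ A, ∀ b ∈ A, a < b → φ a < φ b) → (∀ a ∈ A, a ≤ φ a) →
      A.image φ ∈ F

/-- A family is compact if it is compact (equivalently, closed) as a subset of
`2^ℕ` with the product topology. -/
def IsCompactFam (F : Set (Finset ℕ)) : Prop := IsClosed (charFun '' F)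

/-- A regular family: hereditary, spreading and compact. -/
def IsRegularFam (F : Set (Finset ℕ)) : Prop :=
  IsHereditaryFam F ∧ IsSpreadingFam F ∧ IsCompactFam F

/-- `famComp F G = F[G] = { G_1 ∪ ⋯ ∪ G_k : G_i ∈ G, G_1 < ⋯ < G_k,
(min G_i)_{i=1}^k ∈ F }`. -/
def famComp (F G : Set (Finset ℕ)) : Set (Finset ℕ) :=
  {H | ∃ (k : ℕ) (Gs : Fin k → Finset ℕ) (mins : Fin k → ℕ),
    (∀ i, Gs i ∈ G) ∧
    (∀ i, mins i ∈ Gs i) ∧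
    (∀ i, ∀ a ∈ Gs i, mins i ≤ a) ∧
    (∀ i j : Fin k, i < j → ∀ a ∈ Gs i, ∀ b ∈ Gs j, a < b) ∧
    Finset.image mins Finset.univ ∈ F ∧
    H = Finset.univ.biUnion Gs}

/-- The first Schreier family `S_1 = { A : |A| ≤ min A }` (on positive integers:
note `0 ∈ A` is impossible for nonempty members). -/
def SchreierOne : Set (Finset ℕ) := {A | ∀ n ∈ A, A.card ≤ n}

/-- The Schreier families `S_n`: `S_0` consists of singletons (of positive
integers) and `∅`, and `S_{n+1} = S_1[S_n]`. -/
def Schreier : ℕ → Set (Finset ℕ)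
  | 0 => {A | A.card ≤ 1 ∧ 0 ∉ A}
  | n + 1 => famComp SchreierOne (Schreier n)

/-!
Restricting or spreading the blocks of a member of `F[G]` only moves each block minimum to the
right, so the new set of minima is a spread of a subset of the old one; this gives heredity and
spreading. For compactness, a hereditary family is compact iff every set all of whose finite
subsets lie in it is finite. If an infinite `A` had all its finite subsets in `F[G]`, take a
limit `S` in `2^ℕ` of the sets of block minima of the initial segments of `A`: every finite
subset of `S` lies in `F`, so `S` is finite, and past `max S` the initial segments of `A` end
inside a single block, so an infinite tail of `A` has all its finite subsets in `G`.
-/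

open Topology

lemma IsCompactFam.finite_of_forall_subset_mem {F : Set (Finset ℕ)} (hF : IsCompactFam F)
    {A : Set ℕ} (hA : ∀ T : Finset ℕ, ↑T ⊆ A → T ∈ F) : A.Finite := by
  classical
  let x : ℕ → Bool := fun n => decide (n ∈ A)
  have hlim : Tendsto (fun n => charFun ((Finset.range n).filter (· ∈ A))) atTop (𝓝 x) := by
    refine tendsto_pi_nhds.2 fun m => tendsto_const_nhds.congr' ?_
    filter_upwards [eventually_gt_atTop m] with n hn
    simp [charFun, x, hn]
  obtain ⟨B, -, hBx⟩ : x ∈ charFun '' F :=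
    hF.mem_of_tendsto hlim <| Eventually.of_forall fun n =>
      ⟨_, hA _ fun _ hj => (Finset.mem_filter.1 hj).2, rfl⟩
  refine B.finite_toSet.subset fun n hn => ?_
  simpa [x, charFun, hn] using congrFun hBx n

lemma isCompactFam_of_forall_finite {F : Set (Finset ℕ)} (hF : IsHereditaryFam F)
    (h : ∀ A : Set ℕ, (∀ T : Finset ℕ, ↑T ⊆ A → T ∈ F) → A.Finite) : IsCompactFam F := by
  refine isClosed_of_closure_subset fun x hx => ?_
  have hsupp : ∀ T : Finset ℕ, ↑T ⊆ {n | x n = true} → T ∈ F := by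
    intro T hT
    obtain ⟨m, hm⟩ := T.exists_nat_subset_range
    obtain ⟨_, hagree, B, hB, rfl⟩ := mem_closure_iff_nhds.1 hx _
      ((PiNat.isOpen_cylinder _ x m).mem_nhds (PiNat.self_mem_cylinder x m))
    refine hF B hB T fun n hn => ?_
    have hBn : charFun B n = true := (hagree n (Finset.mem_range.1 (hm hn))).trans (hT hn)
    simpa [charFun] using hBn
  refine ⟨(h _ hsupp).toFinset, hsupp _ (by simp), funext fun n => ?_⟩
  cases hxn : x n <;> simp [charFun, hxn]

/-- Compactness of `2^ℕ`, phrased for sequences of finite sets. -/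
lemma exists_set_frequently_agree (M : ℕ → Finset ℕ) :
    ∃ S : Set ℕ, ∀ m, ∃ᶠ n in atTop, ∀ j < m, (j ∈ M n ↔ j ∈ S) := by
  obtain ⟨x, hx⟩ := exists_clusterPt_of_compactSpace (map (charFun ∘ M) atTop)
  refine ⟨{j | x j = true}, fun m => ?_⟩
  refine (mapClusterPt_iff_frequently.1 hx _
    ((PiNat.isOpen_cylinder _ x m).mem_nhds (PiNat.self_mem_cylinder x m))).mono ?_
  intro n hn j hj
  simpa [charFun] using congrArg (· = true) (hn j hj)

section FamComp

variable {F G : Set (Finset ℕ)}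

lemma IsSpreadingFam.image_mem_of_le (hF : IsSpreadingFam F) {ι : Type*} [LinearOrder ι]
    {s : Finset ι} {u v : ι → ℕ} (hu : StrictMonoOn u s) (hv : StrictMonoOn v s)
    (huv : ∀ i ∈ s, u i ≤ v i) (h : s.image u ∈ F) : s.image v ∈ F := by
  classical
  obtain rfl | ⟨i₀, -⟩ := s.eq_empty_or_nonempty
  · simpa using h
  have : Nonempty ι := ⟨i₀⟩
  let φ : ℕ → ℕ := v ∘ Function.invFunOn u s
  have hφ : ∀ i ∈ s, φ (u i) = v i := fun i hi =>
    congrArg v (hu.injOn.leftInvOn_invFunOn hi)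
  have himage := hF _ h φ ?_ ?_
  · rwa [Finset.image_image, Finset.image_congr (f := φ ∘ u) (g := v) hφ] at himage
  · simp only [Finset.mem_image]
    rintro _ ⟨i, hi, rfl⟩ _ ⟨j, hj, rfl⟩ hij
    rw [hφ i hi, hφ j hj]
    exact hv hi hj ((hu.lt_iff_lt hi hj).1 hij)
  · simp only [Finset.mem_image]
    rintro _ ⟨i, hi, rfl⟩
    exact (hφ i hi).symm ▸ huv i hi

lemma biUnion_mem_famComp {ι : Type*} [LinearOrder ι] (s : Finset ι) (Gs : ι → Finset ℕ)
    (mins : ι → ℕ) (hG : ∀ i ∈ s, Gs i ∈ G) (hmem : ∀ i ∈ s, mins i ∈ Gs i)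
    (hmin : ∀ i ∈ s, ∀ a ∈ Gs i, mins i ≤ a)
    (hlt : ∀ i ∈ s, ∀ j ∈ s, i < j → ∀ a ∈ Gs i, ∀ b ∈ Gs j, a < b)
    (hF : s.image mins ∈ F) : s.biUnion Gs ∈ famComp F G := by
  classical
  let e := s.orderEmbOfFin rfl
  have he : ∀ i, e i ∈ s := s.orderEmbOfFin_mem rfl
  have himage : Finset.univ.image e = s := s.image_orderEmbOfFin_univ rfl
  refine ⟨s.card, Gs ∘ e, mins ∘ e, fun i => hG _ (he i), fun i => hmem _ (he i),
    fun i => hmin _ (he i), fun i j hij => hlt _ (he i) _ (he j) (e.strictMono hij), ?_, ?_⟩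
  · rwa [← Finset.image_image, himage]
  · calc s.biUnion Gs = (Finset.univ.image e).biUnion Gs := by rw [himage]
      _ = _ := Finset.image_biUnion

lemma exists_mem_forall_Icc_inter_mem_of_mem_famComp (hG : IsHereditaryFam G) {H : Finset ℕ}
    (hH : H ∈ famComp F G) : ∃ M ∈ F, ∀ a ∈ H, ∃ c ∈ M, c ≤ a ∧ Finset.Icc c a ∩ H ∈ G := by
  obtain ⟨k, Gs, mins, hGs, hmem, hmin, hlt, hF, rfl⟩ := hH
  refine ⟨_, hF, fun a ha => ?_⟩
  obtain ⟨i, -, hai⟩ := Finset.mem_biUnion.1 ha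
  refine ⟨mins i, Finset.mem_image_of_mem _ (Finset.mem_univ i), hmin i a hai,
    hG _ (hGs i) _ fun b hb => ?_⟩
  obtain ⟨hb, hbH⟩ := Finset.mem_inter.1 hb
  obtain ⟨hib, hba⟩ := Finset.mem_Icc.1 hb
  obtain ⟨j, -, hbj⟩ := Finset.mem_biUnion.1 hbH
  rcases lt_trichotomy j i with hji | rfl | hij
  · exact absurd (hlt j i hji b hbj _ (hmem i)) hib.not_gt
  · exact hbj
  · exact absurd (hlt i j hij a hai b hbj) hba.not_gt

lemma isSpreadingFam_famComp (hF : IsSpreadingFam F) (hG : IsSpreadingFam G) :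
    IsSpreadingFam (famComp F G) := by
  classical
  rintro _ ⟨k, Gs, mins, hGs, hmem, hmin, hlt, hmins, rfl⟩ φ hφ hle
  replace hφ : StrictMonoOn φ ↑(Finset.univ.biUnion Gs) := fun a ha b hb => hφ a ha b hb
  have hsub : ∀ i, Gs i ⊆ Finset.univ.biUnion Gs := fun i =>
    Finset.subset_biUnion_of_mem Gs (Finset.mem_univ i)
  refine ⟨k, fun i => (Gs i).image φ, φ ∘ mins,
    fun i => hG _ (hGs i) φ (fun a ha b hb => hφ (hsub i ha) (hsub i hb))
      (fun a ha => hle a (hsub i ha)),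
    fun i => Finset.mem_image_of_mem φ (hmem i), ?_, ?_, ?_, Finset.biUnion_image⟩
  · simp only [Finset.mem_image, Function.comp_apply]
    rintro i _ ⟨a, ha, rfl⟩
    exact hφ.monotoneOn (hsub i (hmem i)) (hsub i ha) (hmin i a ha)
  · simp only [Finset.mem_image]
    rintro i j hij _ ⟨a, ha, rfl⟩ _ ⟨b, hb, rfl⟩
    exact hφ (hsub i ha) (hsub j hb) (hlt i j hij a ha b hb)
  · rw [← Finset.image_image]
    refine hF _ hmins φ ?_ ?_ <;> simp only [Finset.mem_image, Finset.mem_univ, true_and]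
    · rintro _ ⟨i, rfl⟩ _ ⟨j, rfl⟩
      exact hφ (hsub i (hmem i)) (hsub j (hmem j))
    · rintro _ ⟨i, rfl⟩
      exact hle _ (hsub i (hmem i))

lemma isHereditaryFam_famComp (hF : IsHereditaryFam F) (hFs : IsSpreadingFam F)
    (hG : IsHereditaryFam G) : IsHereditaryFam (famComp F G) := by
  classical
  rintro _ ⟨k, Gs, mins, hGs, hmem, hmin, hlt, hmins, rfl⟩ B hB
  let ι := {i : Fin k // (Gs i ∩ B).Nonempty}
  let mins' : ι → ℕ := fun i => (Gs i ∩ B).min' i.2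
  have hmins' : ∀ i : ι, mins' i ∈ Gs i ∩ B := fun i => Finset.min'_mem _ _
  have hBeq : B = Finset.univ.biUnion fun i : ι => Gs i ∩ B := by
    ext a
    simp only [Finset.mem_biUnion, Finset.mem_univ, true_and, Finset.mem_inter]
    refine ⟨fun ha => ?_, fun ⟨_, _, ha⟩ => ha⟩
    obtain ⟨i, -, hai⟩ := Finset.mem_biUnion.1 (hB ha)
    exact ⟨⟨i, a, Finset.mem_inter.2 ⟨hai, ha⟩⟩, hai, ha⟩
  rw [hBeq]
  refine biUnion_mem_famComp _ _ mins' (fun i _ => hG _ (hGs i) _ Finset.inter_subset_left)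
    (fun i _ => hmins' i) (fun i _ a ha => Finset.min'_le _ a ha)
    (fun i _ j _ hij a ha b hb =>
      hlt i j hij a (Finset.mem_inter.1 ha).1 b (Finset.mem_inter.1 hb).1) ?_
  refine hFs.image_mem_of_le (u := fun i : ι => mins i)
    (fun i _ j _ hij => hlt i j hij _ (hmem i) _ (hmem j))
    (fun i _ j _ hij => hlt i j hij _ (Finset.mem_inter.1 (hmins' i)).1
      _ (Finset.mem_inter.1 (hmins' j)).1)
    (fun i _ => hmin i _ (Finset.mem_inter.1 (hmins' i)).1) (hF _ hmins _ ?_)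
  exact Finset.image_subset_iff.2 fun i _ => Finset.mem_image_of_mem _ (Finset.mem_univ _)

lemma finite_of_forall_subset_mem_famComp (hF : IsHereditaryFam F) (hFc : IsCompactFam F)
    (hG : IsHereditaryFam G) (hGc : IsCompactFam G) {A : Set ℕ}
    (hA : ∀ T : Finset ℕ, ↑T ⊆ A → T ∈ famComp F G) : A.Finite := by
  classical
  refine Set.not_infinite.1 fun hAinf => ?_
  let I : ℕ → Finset ℕ := fun n => (Finset.range n).filter (· ∈ A)
  choose M hMF hM using fun n => exists_mem_forall_Icc_inter_mem_of_mem_famComp hG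
    (hA (I n) fun a ha => (Finset.mem_filter.1 ha).2)
  obtain ⟨S, hS⟩ := exists_set_frequently_agree M
  have hSF : ∀ T : Finset ℕ, ↑T ⊆ S → T ∈ F := by
    intro T hT
    obtain ⟨m, hm⟩ := T.exists_nat_subset_range
    obtain ⟨n, hn⟩ := (hS m).exists
    exact hF _ (hMF n) T fun j hj => (hn j (Finset.mem_range.1 (hm hj))).2 (hT hj)
  obtain ⟨j₀, hj₀⟩ := (hFc.finite_of_forall_subset_mem hSF).bddAbove
  have htail : (A \ Set.Iio j₀).Infinite := hAinf.sdiff (Set.finite_Iio j₀)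
  refine htail (hGc.finite_of_forall_subset_mem fun T hT => ?_)
  obtain ⟨m, hm⟩ := T.exists_nat_subset_range
  obtain ⟨t, ⟨htA, -⟩, hmt⟩ := htail.exists_gt m
  obtain ⟨n, hagree, htn⟩ := ((hS (t + 1)).and_eventually (eventually_gt_atTop t)).exists
  obtain ⟨c, hcM, hct, hcG⟩ := hM n t (by simp [I, htn, htA])
  have hcj₀ : c ≤ j₀ := hj₀ ((hagree c (Nat.lt_succ_of_le hct)).1 hcM)
  refine hG _ hcG T fun s hs => ?_
  obtain ⟨hsA, hsj₀⟩ := hT hs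
  have hsm := Finset.mem_range.1 (hm hs)
  simp only [Set.mem_Iio, not_lt] at hsj₀
  simp only [Finset.mem_inter, Finset.mem_Icc, Finset.mem_filter, Finset.mem_range, I]
  exact ⟨⟨by omega, by omega⟩, by omega, hsA⟩

end FamComp

/-- If `F` and `G` are regular families then so is `F[G]`. -/
theorem isRegular_famComp (F G : Set (Finset ℕ))
    (hF : IsRegularFam F) (hG : IsRegularFam G) :
    IsRegularFam (famComp F G) := by
  obtain ⟨hFh, hFs, hFc⟩ := hF
  obtain ⟨hGh, hGs, hGc⟩ := hG
  have hh := isHereditaryFam_famComp hFh hFs hGh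
  exact ⟨hh, isSpreadingFam_famComp hFs hGs, isCompactFam_of_forall_finite hh
    fun _ hA => finite_of_forall_subset_mem_famComp hFh hFc hGh hGc hA⟩
end

section
/- Let F, G ⊆ [ℕ]^{<∞} be regular families. Then the family (F, G) = { F ∪ G : F ∈ F, G ∈ G, F < G } is regular. -/
open Filter

/-! Heredity and spreading pass to `(F, G)` componentwise. For compactness, the image of `(F, G)`
in `2^ℕ` is the image under the continuous map "pointwise or" of the pairs `(x, y)` in the
compact set `charFun '' F ×ˢ charFun '' G` with `supp x < supp y`, a closed condition. -/

def famPair (F G : Set (Finset ℕ)) : Set (Finset ℕ) :=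
  {H | ∃ A B : Finset ℕ, A ∈ F ∧ B ∈ G ∧ (∀ a ∈ A, ∀ b ∈ B, a < b) ∧ H = A ∪ B}

lemma IsHereditaryFam.famPair {F G : Set (Finset ℕ)} (hF : IsHereditaryFam F)
    (hG : IsHereditaryFam G) : IsHereditaryFam (famPair F G) := by
  rintro _ ⟨A, B, hA, hB, hAB, rfl⟩ C hC
  refine ⟨C ∩ A, C ∩ B, hF A hA _ Finset.inter_subset_right,
    hG B hB _ Finset.inter_subset_right,
    fun a ha b hb => hAB a (Finset.mem_of_mem_inter_right ha) b (Finset.mem_of_mem_inter_right hb),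
    ?_⟩
  rw [← Finset.inter_union_distrib_left, Finset.inter_eq_left.2 hC]

lemma IsSpreadingFam.famPair {F G : Set (Finset ℕ)} (hF : IsSpreadingFam F)
    (hG : IsSpreadingFam G) : IsSpreadingFam (famPair F G) := by
  rintro _ ⟨A, B, hA, hB, hAB, rfl⟩ φ hmono hle
  simp only [Finset.mem_union] at hmono hle
  refine ⟨A.image φ, B.image φ,
    hF A hA φ (fun a ha b hb => hmono a (.inl ha) b (.inl hb)) (fun a ha => hle a (.inl ha)),
    hG B hB φ (fun a ha b hb => hmono a (.inr ha) b (.inr hb)) (fun a ha => hle a (.inr ha)),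
    ?_, Finset.image_union A B⟩
  simp only [Finset.mem_image]
  rintro _ ⟨a, ha, rfl⟩ _ ⟨b, hb, rfl⟩
  exact hmono a (.inl ha) b (.inr hb) (hAB a ha b hb)

def separatedPairs : Set ((ℕ → Bool) × (ℕ → Bool)) :=
  {p | ∀ a b, p.1 a = true → p.2 b = true → a < b}

lemma charFun_union (A B : Finset ℕ) :
    charFun (A ∪ B) = fun n => charFun A n || charFun B n := by
  funext n
  simp [charFun]

lemma isCompactFam_iff {F : Set (Finset ℕ)} : IsCompactFam F ↔ IsCompact (charFun '' F) :=
  ⟨IsClosed.isCompact, IsCompact.isClosed⟩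

lemma isClosed_separatedPairs : IsClosed separatedPairs := by
  simp only [separatedPairs, Set.ofPred_forall]
  refine isClosed_iInter fun a => isClosed_iInter fun b => ?_
  have hcont : Continuous fun p : (ℕ → Bool) × (ℕ → Bool) => (p.1 a, p.2 b) := by fun_prop
  exact (isClosed_discrete {q : Bool × Bool | q.1 = true → q.2 = true → a < b}).preimage hcont

lemma image_charFun_famPair (F G : Set (Finset ℕ)) :
    charFun '' famPair F G = (fun p : (ℕ → Bool) × (ℕ → Bool) => fun n => p.1 n || p.2 n) ''
      ((charFun '' F) ×ˢ (charFun '' G) ∩ separatedPairs) := by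
  ext f
  constructor
  · rintro ⟨_, ⟨A, B, hA, hB, hAB, rfl⟩, rfl⟩
    refine ⟨(charFun A, charFun B), ⟨⟨⟨A, hA, rfl⟩, ⟨B, hB, rfl⟩⟩, ?_⟩, (charFun_union A B).symm⟩
    intro a b ha hb
    exact hAB a (by simpa [charFun] using ha) b (by simpa [charFun] using hb)
  · rintro ⟨⟨_, _⟩, ⟨⟨⟨A, hA, rfl⟩, ⟨B, hB, rfl⟩⟩, hsep⟩, rfl⟩
    refine ⟨A ∪ B, ⟨A, B, hA, hB, fun a ha b hb => hsep a b ?_ ?_, rfl⟩, charFun_union A B⟩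
    <;> simpa [charFun]

lemma IsCompactFam.famPair {F G : Set (Finset ℕ)} (hF : IsCompactFam F) (hG : IsCompactFam G) :
    IsCompactFam (famPair F G) := by
  rw [isCompactFam_iff, image_charFun_famPair]
  refine (((isCompactFam_iff.1 hF).prod (isCompactFam_iff.1 hG)).inter_right
    isClosed_separatedPairs).image ?_
  fun_prop

/-- If `F` and `G` are regular families then so is
`(F, G) = { A ∪ B : A ∈ F, B ∈ G, A < B }`. -/
theorem isRegular_famPair (F G : Set (Finset ℕ))
    (hF : IsRegularFam F) (hG : IsRegularFam G) :
    IsRegularFam {H | ∃ A B : Finset ℕ, A ∈ F ∧ B ∈ G ∧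
      (∀ a ∈ A, ∀ b ∈ B, a < b) ∧ H = A ∪ B} :=
  ⟨hF.1.famPair hG.1, hF.2.1.famPair hG.2.1, hF.2.2.famPair hG.2.2⟩
end

section
/- The Cantor–Bendixson index of the Schreier family S_1 satisfies ι(S_1) = ω, where for a compact family F ⊆ [ℕ]^{<∞}, ι(F) is the least ordinal α such that the α+1-st Cantor–Bendixson derivative F^{(α+1)} is empty. -/
open Filter

/-- The Cantor–Bendixson derivative: the set of accumulation points of `s`. -/
def cbDeriv {X : Type*} [TopologicalSpace X] (s : Set X) : Set X :=
  {x | AccPt x (Filter.principal s)}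

/-- Iterated Cantor–Bendixson derivatives `s^(o)`, indexed by ordinals. -/
noncomputable def cbIter {X : Type*} [TopologicalSpace X] (s : Set X)
    (o : Ordinal) : Set X :=
  Ordinal.limitRecOn o s (fun _ ih => cbDeriv ih)
    (fun o _ ih => ⋂ (b : Ordinal) (h : b < o), ih b h)

/-!
The `k`-th derivative of `S_1` is `{A : |A| + k ≤ min A}`. Each such family is closed in `2^ℕ`;
`A` is the limit of `A ∪ {n}` as `n → ∞`, and the members of the family close to `A` are
supersets of `A`, so `A` is a limit point exactly when it has proper supersets in the family.
These families shrink to `{∅}`, so `S_1^(ω)` has at most one point and `S_1^(ω+1) = ∅`,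
whereas `∅` survives every finite derivative.
-/

open Topology
open scoped Ordinal

section CantorBendixson

variable {X : Type*} [TopologicalSpace X]

lemma cbDeriv_eq_empty_of_finite [T1Space X] {s : Set X} (hs : s.Finite) : cbDeriv s = ∅ :=
  Set.eq_empty_of_forall_notMem fun _ hx => Set.Infinite.of_accPt hx hs

lemma cbIter_zero (s : Set X) : cbIter s 0 = s :=
  Ordinal.limitRecOn_zero _ _ _

lemma cbIter_add_one (s : Set X) (o : Ordinal) : cbIter s (o + 1) = cbDeriv (cbIter s o) := by
  rw [cbIter, Ordinal.limitRecOn_add_one]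
  rfl

lemma cbIter_of_isSuccLimit (s : Set X) {o : Ordinal} (ho : Order.IsSuccLimit o) :
    cbIter s o = ⋂ (b : Ordinal) (_ : b < o), cbIter s b := by
  rw [cbIter, Ordinal.limitRecOn_limit _ _ _ _ ho]
  rfl

end CantorBendixson

def schreierOneDeriv (k : ℕ) : Set (Finset ℕ) := {A | ∀ n ∈ A, A.card + k ≤ n}

lemma schreierOneDeriv_zero : schreierOneDeriv 0 = SchreierOne := by
  simp [schreierOneDeriv, SchreierOne]

lemma empty_mem_schreierOneDeriv (k : ℕ) : ∅ ∈ schreierOneDeriv k := by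
  simp [schreierOneDeriv]

lemma eq_empty_of_forall_mem_schreierOneDeriv {A : Finset ℕ}
    (hA : ∀ k, A ∈ schreierOneDeriv k) : A = ∅ := by
  by_contra hne
  obtain ⟨n, hn⟩ := Finset.nonempty_iff_ne_empty.mpr hne
  have := hA (n + 1) n hn
  omega

lemma charFun_eq_true {A : Finset ℕ} {n : ℕ} : charFun A n = true ↔ n ∈ A := by
  simp [charFun]

lemma charFun_injective : Function.Injective charFun := fun A B h =>
  Finset.ext fun n => by rw [← charFun_eq_true, h, charFun_eq_true]

lemma isOpen_setOf_eq_true (m : ℕ) : IsOpen {y : ℕ → Bool | y m = true} :=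
  (continuous_apply (A := fun _ => Bool) m).isOpen_preimage {true} (isOpen_discrete _)

lemma isOpen_setOf_forall_mem_eq_true (A : Finset ℕ) :
    IsOpen {y : ℕ → Bool | ∀ m ∈ A, y m = true} := by
  convert isOpen_biInter_finset fun m (_ : m ∈ A) => isOpen_setOf_eq_true m using 1
  ext y
  simp

lemma setOf_forall_mem_eq_true_mem_nhds (A : Finset ℕ) :
    {y : ℕ → Bool | ∀ m ∈ A, y m = true} ∈ 𝓝 (charFun A) :=
  (isOpen_setOf_forall_mem_eq_true A).mem_nhds fun _ hm => charFun_eq_true.mpr hm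

lemma tendsto_charFun_insert (A : Finset ℕ) :
    Tendsto (fun n => charFun (insert n A)) atTop (𝓝 (charFun A)) := by
  rw [tendsto_pi_nhds]
  intro m
  refine tendsto_const_nhds.congr' ?_
  filter_upwards [eventually_gt_atTop m] with n hn
  simp [charFun, hn.ne]

lemma image_charFun_schreierOneDeriv (k : ℕ) :
    charFun '' schreierOneDeriv k =
      ⋂ (n : ℕ) (s : Finset ℕ),
        {x | (x n = true ∧ ∀ m ∈ s, x m = true) → s.card + k ≤ n} := by
  ext x
  simp only [Set.mem_iInter, Set.mem_ofPred_eq, and_imp]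
  constructor
  · rintro ⟨A, hA, rfl⟩ n s hn hs
    have hsA : s ⊆ A := fun m hm => charFun_eq_true.mp (hs m hm)
    exact (Nat.add_le_add_right (Finset.card_le_card hsA) k).trans (hA n (charFun_eq_true.mp hn))
  · intro hx
    have hfin : {m | x m = true}.Finite := by
      by_contra hinf
      obtain ⟨n, hn⟩ := Set.Infinite.nonempty hinf
      obtain ⟨s, hs, hcard⟩ := Set.Infinite.exists_subset_card_eq hinf (n + 1)
      have := hx n s hn fun m hm => hs hm
      omega
    refine ⟨hfin.toFinset, fun n hn => ?_, funext fun n => ?_⟩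
    · exact hx n _ (by simpa using hn) fun m hm => by simpa using hm
    · simp [charFun]

lemma isClosed_image_charFun_schreierOneDeriv (k : ℕ) :
    IsClosed (charFun '' schreierOneDeriv k) := by
  rw [image_charFun_schreierOneDeriv]
  refine isClosed_iInter fun n => isClosed_iInter fun s => isClosed_imp ?_ isClosed_const
  exact (isOpen_setOf_eq_true n).inter (isOpen_setOf_forall_mem_eq_true s)

lemma insert_mem_schreierOneDeriv {k n : ℕ} {A : Finset ℕ} (hA : A ∈ schreierOneDeriv (k + 1))
    (hnA : n ∉ A) (hn : A.card + k + 1 ≤ n) : insert n A ∈ schreierOneDeriv k := by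
  intro m hm
  rw [Finset.card_insert_of_notMem hnA]
  rcases Finset.mem_insert.mp hm with rfl | hmA
  · omega
  · have := hA m hmA
    omega

lemma cbDeriv_image_charFun_schreierOneDeriv (k : ℕ) :
    cbDeriv (charFun '' schreierOneDeriv k) = charFun '' schreierOneDeriv (k + 1) := by
  ext x
  constructor
  · intro hx
    have hx_cl : x ∈ closure (charFun '' schreierOneDeriv k) :=
      mem_closure_iff_clusterPt.mpr hx.clusterPt
    rw [(isClosed_image_charFun_schreierOneDeriv k).closure_eq] at hx_cl
    obtain ⟨A, hA, rfl⟩ := hx_cl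
    obtain ⟨_, ⟨hAB, B, hB, rfl⟩, hBA⟩ :=
      accPt_iff_nhds.mp hx _ (setOf_forall_mem_eq_true_mem_nhds A)
    have hsub : A ⊂ B := Finset.ssubset_iff_subset_ne.mpr
      ⟨fun m hm => charFun_eq_true.mp (hAB m hm), fun h => hBA (congrArg charFun h.symm)⟩
    refine ⟨A, fun n hn => ?_, rfl⟩
    have := hB n (hsub.subset hn)
    have := Finset.card_lt_card hsub
    omega
  · rintro ⟨A, hA, rfl⟩
    rw [cbDeriv, Set.mem_ofPred_eq, accPt_principal_iff_clusterPt, ← mem_closure_iff_clusterPt]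
    refine mem_closure_of_tendsto (tendsto_charFun_insert A) ?_
    have hnotMem : ∀ᶠ n in atTop, n ∉ A :=
      Nat.cofinite_eq_atTop ▸ A.eventually_cofinite_notMem
    filter_upwards [hnotMem, eventually_ge_atTop (A.card + k + 1)] with n hnA hn
    refine ⟨⟨_, insert_mem_schreierOneDeriv hA hnA hn, rfl⟩, fun h => hnA ?_⟩
    rw [← charFun_injective h]
    exact Finset.mem_insert_self n A

lemma cbIter_schreierOne_natCast (k : ℕ) :
    cbIter (charFun '' SchreierOne) k = charFun '' schreierOneDeriv k := by
  induction k with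
  | zero => rw [Nat.cast_zero, cbIter_zero, schreierOneDeriv_zero]
  | succ k ih =>
    rw [Nat.cast_succ, cbIter_add_one, ih, cbDeriv_image_charFun_schreierOneDeriv]

lemma cbIter_schreierOne_omega0_subset :
    cbIter (charFun '' SchreierOne) ω ⊆ {charFun ∅} := by
  intro x hx
  rw [cbIter_of_isSuccLimit _ Ordinal.isSuccLimit_omega0] at hx
  have hk : ∀ k : ℕ, x ∈ charFun '' schreierOneDeriv k := fun k => by
    simpa only [cbIter_schreierOne_natCast] using
      Set.mem_iInter₂.mp hx k (Ordinal.natCast_lt_omega0 k)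
  obtain ⟨A, -, rfl⟩ := hk 0
  have hA : ∀ k, A ∈ schreierOneDeriv k := fun k => by
    obtain ⟨B, hB, hBA⟩ := hk k
    rwa [← charFun_injective hBA]
  rw [eq_empty_of_forall_mem_schreierOneDeriv hA]
  rfl

/-- The Cantor–Bendixson index of the Schreier family `S_1`, i.e. the least
ordinal `α` with `S_1^(α+1) = ∅`, equals `ω`. -/
theorem cbIndex_schreierOne :
    sInf {a : Ordinal | cbIter (charFun '' SchreierOne) (a + 1) = ∅} =
      Ordinal.omega0 := by
  refine IsLeast.csInf_eq ⟨?_, fun a ha => ?_⟩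
  · show cbIter _ (ω + 1) = ∅
    rw [cbIter_add_one]
    exact cbDeriv_eq_empty_of_finite
      ((Set.finite_singleton _).subset cbIter_schreierOne_omega0_subset)
  · by_contra! ha_lt
    obtain ⟨n, rfl⟩ := Ordinal.lt_omega0.mp ha_lt
    have hempty : cbIter (charFun '' SchreierOne) (n + 1 : ℕ) = ∅ := by exact_mod_cast ha
    rw [cbIter_schreierOne_natCast] at hempty
    exact Set.Nonempty.ne_empty
      ⟨_, Set.mem_image_of_mem charFun (empty_mem_schreierOneDeriv _)⟩ hempty
end

section
/- Let X be a Banach space with a normalized basis (e_k) and suppose (z_k) is a normalized block basis of (e_k) that is equivalent to some subsequence of (e_k). Assume that any two subsequences (e_{n_i}) and (e_{ℓ_i}) of (e_k) with max{n_i, ℓ_i} < min{n_{i+1}, ℓ_{i+1}} for all i are equivalent. Then there is a subsequence (z_{k_j}) of (z_k) that is equivalent to (e_{m_j}), where m_j = min supp z_{k_j}. -/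
/-- Two sequences are equivalent if there is a two-sided domination constant for
all finitely supported linear combinations. -/
def SeqEquiv {X : Type*} [NormedAddCommGroup X] [NormedSpace ℝ X]
    (x y : ℕ → X) : Prop :=
  ∃ K : ℝ, 0 < K ∧ ∀ (s : Finset ℕ) (a : ℕ → ℝ),
    ‖∑ i ∈ s, a i • x i‖ ≤ K * ‖∑ i ∈ s, a i • y i‖ ∧
    ‖∑ i ∈ s, a i • y i‖ ≤ K * ‖∑ i ∈ s, a i • x i‖

theorem SeqEquiv.trans' {X : Type*} [NormedAddCommGroup X] [NormedSpace ℝ X]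
    {x y w : ℕ → X} (h1 : SeqEquiv x y) (h2 : SeqEquiv y w) : SeqEquiv x w := by
  obtain ⟨K1, hK1, h1⟩ := h1
  obtain ⟨K2, hK2, h2⟩ := h2
  refine ⟨K1 * K2, mul_pos hK1 hK2, fun s a => ?_⟩
  obtain ⟨h1a, h1b⟩ := h1 s a
  obtain ⟨h2a, h2b⟩ := h2 s a
  constructor
  · calc ‖∑ i ∈ s, a i • x i‖ ≤ K1 * ‖∑ i ∈ s, a i • y i‖ := h1a
      _ ≤ K1 * (K2 * ‖∑ i ∈ s, a i • w i‖) := by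
          exact mul_le_mul_of_nonneg_left h2a hK1.le
      _ = K1 * K2 * ‖∑ i ∈ s, a i • w i‖ := by ring
  · calc ‖∑ i ∈ s, a i • w i‖ ≤ K2 * ‖∑ i ∈ s, a i • y i‖ := h2b
      _ ≤ K2 * (K1 * ‖∑ i ∈ s, a i • x i‖) := by
          exact mul_le_mul_of_nonneg_left h1b hK2.le
      _ = K1 * K2 * ‖∑ i ∈ s, a i • x i‖ := by ring

theorem SeqEquiv.comp' {X : Type*} [NormedAddCommGroup X] [NormedSpace ℝ X]
    {x y : ℕ → X} (h : SeqEquiv x y) {k : ℕ → ℕ} (hk : Function.Injective k) :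
    SeqEquiv (fun j => x (k j)) (fun j => y (k j)) := by
  obtain ⟨K, hK, h⟩ := h
  refine ⟨K, hK, fun s a => ?_⟩
  obtain ⟨ha, hb⟩ := h (s.image k) (fun j => a (Function.invFun k j))
  have key : ∀ f : ℕ → X,
      ∑ i ∈ s.image k, a (Function.invFun k i) • f i = ∑ i ∈ s, a i • f (k i) := by
    intro f
    rw [Finset.sum_image (fun i _ j _ hij => hk hij)]
    refine Finset.sum_congr rfl fun i _ => ?_
    rw [Function.leftInverse_invFun hk i]
  rw [key x, key y] at ha hb
  exact ⟨ha, hb⟩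

/-- If any two interlaced subsequences of the normalized basis `(e_k)` are
equivalent, and `(z_k)` is a normalized block basis equivalent to some
subsequence of `(e_k)`, then some subsequence `(z_{k_j})` is equivalent to
`(e_{m_j})` where `m_j = min supp z_{k_j}`. -/
theorem exists_subseq_equiv_min_support {X : Type*}
    [NormedAddCommGroup X] [NormedSpace ℝ X]
    (e : ℕ → X) (henorm : ∀ k, ‖e k‖ = 1)
    (hinterlace : ∀ n ℓ : ℕ → ℕ, StrictMono n → StrictMono ℓ →
      (∀ i, max (n i) (ℓ i) < min (n (i + 1)) (ℓ (i + 1))) →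
      SeqEquiv (fun i => e (n i)) (fun i => e (ℓ i)))
    (E : ℕ → Finset ℕ) (hEne : ∀ k, (E k).Nonempty)
    (hEsucc : ∀ k, ∀ a ∈ E k, ∀ b ∈ E (k + 1), a < b)
    (c : ℕ → ℝ) (hc : ∀ k, ∀ i ∈ E k, c i ≠ 0)
    (z : ℕ → X) (hz : ∀ k, z k = ∑ i ∈ E k, c i • e i)
    (hznorm : ∀ k, ‖z k‖ = 1)
    (m : ℕ → ℕ) (hm : ∀ k, m k = (E k).min' (hEne k))
    (hsub : ∃ n : ℕ → ℕ, StrictMono n ∧ SeqEquiv z (fun j => e (n j))) :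
    ∃ k : ℕ → ℕ, StrictMono k ∧
      SeqEquiv (fun j => z (k j)) (fun j => e (m (k j))) := by
  obtain ⟨n, hn, hzn⟩ := hsub
  -- m is strictly monotone
  have hmmono : StrictMono m := by
    apply strictMono_nat_of_lt_succ
    intro i
    rw [hm i, hm (i + 1)]
    exact hEsucc i _ ((E i).min'_mem (hEne i)) _ ((E (i + 1)).min'_mem (hEne (i + 1)))
  -- define the subsequence
  set k : ℕ → ℕ := fun i => Nat.rec 0 (fun _ p => max (n p) (m p) + 1) i with hk
  have hksucc : ∀ i, k (i + 1) = max (n (k i)) (m (k i)) + 1 := fun i => rfl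
  have hkmono : StrictMono k := by
    apply strictMono_nat_of_lt_succ
    intro i
    rw [hksucc i]
    calc k i ≤ m (k i) := hmmono.le_apply
      _ ≤ max (n (k i)) (m (k i)) := le_max_right _ _
      _ < _ + 1 := Nat.lt_succ_self _
  refine ⟨k, hkmono, ?_⟩
  have h1 : SeqEquiv (fun j => z (k j)) (fun j => e (n (k j))) :=
    hzn.comp' hkmono.injective
  have h2 : SeqEquiv (fun j => e (n (k j))) (fun j => e (m (k j))) := by
    apply hinterlace (fun j => n (k j)) (fun j => m (k j))
      (hn.comp hkmono) (hmmono.comp hkmono)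
    intro i
    have hlt : max (n (k i)) (m (k i)) < k (i + 1) := by
      rw [hksucc i]; exact Nat.lt_succ_self _
    refine lt_min (lt_of_lt_of_le hlt hn.le_apply) (lt_of_lt_of_le hlt hmmono.le_apply)
  exact h1.trans' h2
end
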